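/- arXiv:cs/0209018 — 2 statements merged into one kernel-verified Lean document; each statement's English description precedes it below -/
import Mathlib

section
/- If a language L₁ ⊆ Σ* is recognized by a PRA-C with probability p₁ > 2/3 and a language L₂ ⊆ Σ* is recognized by a PRA-C with probability p₂ > 2/3, then each of the languages L₁ ∩ L₂ and L₁ ∪ L₂ is recognized by some PRA-C with probability strictly greater than 1/2. -/
/-- A real square matrix is doubly stochastic if all entries are nonnegative and
every row and every column sums to 1. -/
def DoublyStochastic {n : ℕ} (A : Matrix (Fin n) (Fin n) ℝ) : Prop :=
  (∀ i j, 0 ≤ A i j) ∧ (∀ i, ∑ j, A i j = 1) ∧ (∀ j, ∑ i, A i j = 1)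

/-- A 1-way probabilistic reversible C-automaton (PRA-C) over input alphabet `α`:
a finite state set `Fin n`, an initial state, a set of accepting states, and
a doubly stochastic matrix for each symbol of the working alphabet
(the letters of `α` together with the end-markers `#` and `$`). -/
structure PRAC (α : Type) where
  n : ℕ
  q0 : Fin n
  F : Finset (Fin n)
  V : α → Matrix (Fin n) (Fin n) ℝ
  Vhash : Matrix (Fin n) (Fin n) ℝ
  Vdollar : Matrix (Fin n) (Fin n) ℝ
  ds : ∀ a, DoublyStochastic (V a)
  ds_hash : DoublyStochastic Vhash
  ds_dollar : DoublyStochastic Vdollar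

namespace PRAC

variable {α : Type}

/-- Acceptance probability of a word `w = σ₁…σ_k`: the total mass on accepting states of
`V_$ ⬝ V_{σ_k} ⬝ ⋯ ⬝ V_{σ₁} ⬝ V_# ⬝ e_{q₀}`. -/
def accProb (A : PRAC α) (w : List α) : ℝ :=
  ∑ q ∈ A.F,
    (A.Vdollar.mulVec
      (w.foldl (fun v a => (A.V a).mulVec v) (A.Vhash.mulVec (Pi.single A.q0 1)))) q

/-- Recognition of a language with interval `(p₁, p₂)`. -/
def Recognizes (A : PRAC α) (L : Set (List α)) (p1 p2 : ℝ) : Prop :=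
  0 ≤ p1 ∧ p1 < p2 ∧ p2 ≤ 1 ∧
  (∀ w ∈ L, p2 ≤ A.accProb w) ∧ (∀ w ∉ L, A.accProb w ≤ p1)

/-- Recognition with probability `p`, i.e. with interval `(1 - p, p)`. -/
def RecognizesWithProb (A : PRAC α) (L : Set (List α)) (p : ℝ) : Prop :=
  A.Recognizes L (1 - p) p

end PRAC

/-!
Run the two automata in parallel on the product state space: Kronecker products of doubly
stochastic matrices are doubly stochastic, and the product automaton accepting on `F₁ × F₂`
accepts with probability `a₁ a₂`. Complementing the accepting set turns `a` into `1 - a`, so by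
De Morgan the union reduces to the intersection. For `L₁ ∩ L₂` the product accepts words of the
language with probability `> 4/9` and all other words with probability `< 1/3`; taking its "or"
with an independent coin of bias `1/4` gives acceptance probability `1/4 + 3/4 a₁ a₂`, which
moves these bounds to `> 7/12` and `< 1/2`.
-/

open Matrix Finset Kronecker

section DoublyStochastic

variable {m n : Type*} [Fintype m] [DecidableEq m] [Fintype n] [DecidableEq n]

theorem doublyStochastic_iff_mem {k : ℕ} (A : Matrix (Fin k) (Fin k) ℝ) :
    DoublyStochastic A ↔ A ∈ doublyStochastic ℝ (Fin k) :=
  mem_doublyStochastic_iff_sum.symm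

theorem kronecker_mem_doublyStochastic {A : Matrix m m ℝ} {B : Matrix n n ℝ}
    (hA : A ∈ doublyStochastic ℝ m) (hB : B ∈ doublyStochastic ℝ n) :
    A ⊗ₖ B ∈ doublyStochastic ℝ (m × n) := by
  rw [mem_doublyStochastic_iff_sum] at hA hB ⊢
  obtain ⟨hA0, hAr, hAc⟩ := hA
  obtain ⟨hB0, hBr, hBc⟩ := hB
  refine ⟨fun i j => mul_nonneg (hA0 _ _) (hB0 _ _), fun i => ?_, fun j => ?_⟩
  · simp only [Fintype.sum_prod_type, kroneckerMap_apply, ← Finset.sum_mul_sum, hAr, hBr, mul_one]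
  · simp only [Fintype.sum_prod_type, kroneckerMap_apply, ← Finset.sum_mul_sum, hAc, hBc, mul_one]

theorem uniform_mem_doublyStochastic [Nonempty m] :
    of (fun _ _ => (Fintype.card m : ℝ)⁻¹) ∈ doublyStochastic ℝ m := by
  have hcard : (Fintype.card m : ℝ) ≠ 0 := Nat.cast_ne_zero.2 Fintype.card_ne_zero
  rw [mem_doublyStochastic_iff_sum]
  refine ⟨fun _ _ => inv_nonneg.2 (Nat.cast_nonneg _), fun _ => ?_, fun _ => ?_⟩ <;>
    simp [Finset.card_univ, hcard]

theorem DoublyStochastic.reindex_kronecker {k l : ℕ} {A : Matrix (Fin k) (Fin k) ℝ}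
    {B : Matrix (Fin l) (Fin l) ℝ} (hA : DoublyStochastic A) (hB : DoublyStochastic B) :
    DoublyStochastic (reindex finProdFinEquiv finProdFinEquiv (A ⊗ₖ B)) :=
  (doublyStochastic_iff_mem _).2 <| reindex_mem_doublyStochastic <|
    kronecker_mem_doublyStochastic ((doublyStochastic_iff_mem _).1 hA)
      ((doublyStochastic_iff_mem _).1 hB)

end DoublyStochastic

theorem List.prod_map_kronecker {ι R m n : Type*} [CommSemiring R] [Fintype m] [DecidableEq m]
    [Fintype n] [DecidableEq n] (l : List ι) (A : ι → Matrix m m R) (B : ι → Matrix n n R) :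
    (l.map fun i => A i ⊗ₖ B i).prod = (l.map A).prod ⊗ₖ (l.map B).prod := by
  induction l with
  | nil => simp
  | cons i l ih => simp [ih, mul_kronecker_mul]

theorem List.foldl_mulVec {ι R n : Type*} [CommSemiring R] [Fintype n] [DecidableEq n]
    (l : List ι) (V : ι → Matrix n n R) (x : n → R) :
    l.foldl (fun v i => V i *ᵥ v) x = (l.map V).reverse.prod *ᵥ x := by
  induction l generalizing x with
  | nil => simp
  | cons i l ih => simp [ih, mulVec_mulVec]

namespace PRAC

variable {α : Type}

def wordMatrix (A : PRAC α) (w : List α) : Matrix (Fin A.n) (Fin A.n) ℝ :=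
  A.Vdollar * (w.map A.V).reverse.prod * A.Vhash

theorem wordMatrix_mem_doublyStochastic (A : PRAC α) (w : List α) :
    A.wordMatrix w ∈ doublyStochastic ℝ (Fin A.n) := by
  have hV : ∀ a, A.V a ∈ doublyStochastic ℝ (Fin A.n) :=
    fun a => (doublyStochastic_iff_mem _).1 (A.ds a)
  refine mul_mem (mul_mem ((doublyStochastic_iff_mem _).1 A.ds_dollar) ?_)
    ((doublyStochastic_iff_mem _).1 A.ds_hash)
  exact list_prod_mem (by simpa using fun a _ => hV a)

theorem accProb_eq_sum_wordMatrix (A : PRAC α) (w : List α) :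
    A.accProb w = ∑ q ∈ A.F, A.wordMatrix w q A.q0 := by
  simp only [accProb, wordMatrix, List.foldl_mulVec, mulVec_mulVec, mulVec_single_one]
  rfl

theorem accProb_nonneg (A : PRAC α) (w : List α) : 0 ≤ A.accProb w := by
  rw [accProb_eq_sum_wordMatrix]
  exact Finset.sum_nonneg fun _ _ =>
    nonneg_of_mem_doublyStochastic (A.wordMatrix_mem_doublyStochastic w)

def compl (A : PRAC α) : PRAC α := { A with F := A.Fᶜ }

theorem accProb_add_accProb_compl (A : PRAC α) (w : List α) :
    A.accProb w + A.compl.accProb w = 1 := by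
  rw [accProb_eq_sum_wordMatrix, accProb_eq_sum_wordMatrix]
  exact (Finset.sum_add_sum_compl _ _).trans
    (sum_col_of_mem_doublyStochastic (A.wordMatrix_mem_doublyStochastic w) _)

theorem accProb_compl (A : PRAC α) (w : List α) : A.compl.accProb w = 1 - A.accProb w := by
  linarith [A.accProb_add_accProb_compl w]

theorem accProb_le_one (A : PRAC α) (w : List α) : A.accProb w ≤ 1 := by
  linarith [A.accProb_add_accProb_compl w, A.compl.accProb_nonneg w]

theorem RecognizesWithProb.compl {A : PRAC α} {L : Set (List α)} {p : ℝ}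
    (h : A.RecognizesWithProb L p) : A.compl.RecognizesWithProb Lᶜ p := by
  obtain ⟨h0, hlt, h1, hL, hLc⟩ := h
  refine ⟨h0, hlt, h1, fun w hw => ?_, fun w hw => ?_⟩ <;> rw [accProb_compl]
  · linarith [hLc w hw]
  · linarith [hL w (not_not.1 hw)]

noncomputable def prod (A B : PRAC α) (F : Finset (Fin A.n × Fin B.n)) : PRAC α where
  n := A.n * B.n
  q0 := finProdFinEquiv (A.q0, B.q0)
  F := F.map finProdFinEquiv.toEmbedding
  V a := reindex finProdFinEquiv finProdFinEquiv (A.V a ⊗ₖ B.V a)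
  Vhash := reindex finProdFinEquiv finProdFinEquiv (A.Vhash ⊗ₖ B.Vhash)
  Vdollar := reindex finProdFinEquiv finProdFinEquiv (A.Vdollar ⊗ₖ B.Vdollar)
  ds a := (A.ds a).reindex_kronecker (B.ds a)
  ds_hash := A.ds_hash.reindex_kronecker B.ds_hash
  ds_dollar := A.ds_dollar.reindex_kronecker B.ds_dollar

theorem wordMatrix_prod (A B : PRAC α) (F : Finset (Fin A.n × Fin B.n)) (w : List α) :
    (A.prod B F).wordMatrix w =
      reindex finProdFinEquiv finProdFinEquiv (A.wordMatrix w ⊗ₖ B.wordMatrix w) := by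
  have hV : (w.map (A.prod B F).V).reverse.prod =
      reindexAlgEquiv ℝ ℝ finProdFinEquiv
        ((w.map A.V).reverse.prod ⊗ₖ (w.map B.V).reverse.prod) := by
    rw [← List.map_reverse, ← List.map_reverse, ← List.map_reverse, ← List.prod_map_kronecker,
      map_list_prod, List.map_map]
    rfl
  rw [wordMatrix, hV, wordMatrix, wordMatrix, mul_kronecker_mul, mul_kronecker_mul,
    ← coe_reindexAlgEquiv ℝ ℝ, map_mul, map_mul]
  rfl

theorem accProb_prod (A B : PRAC α) (F : Finset (Fin A.n × Fin B.n)) (w : List α) :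
    (A.prod B F).accProb w = ∑ q ∈ F, A.wordMatrix w q.1 A.q0 * B.wordMatrix w q.2 B.q0 := by
  rw [accProb_eq_sum_wordMatrix, wordMatrix_prod]
  simp only [prod, Finset.sum_map, Equiv.coe_toEmbedding, reindex_apply, submatrix_apply,
    Equiv.symm_apply_apply, kroneckerMap_apply]

noncomputable def inter (A B : PRAC α) : PRAC α := A.prod B (A.F ×ˢ B.F)

theorem accProb_inter (A B : PRAC α) (w : List α) :
    (A.inter B).accProb w = A.accProb w * B.accProb w := by
  rw [inter, accProb_prod, Finset.sum_product, accProb_eq_sum_wordMatrix,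
    accProb_eq_sum_wordMatrix, Finset.sum_mul_sum]

noncomputable def union (A B : PRAC α) : PRAC α := (A.compl.inter B.compl).compl

theorem accProb_union (A B : PRAC α) (w : List α) :
    (A.union B).accProb w = 1 - (1 - A.accProb w) * (1 - B.accProb w) := by
  rw [union, accProb_compl, accProb_inter, accProb_compl, accProb_compl]

noncomputable def coin (k : ℕ) [NeZero k] (F : Finset (Fin k)) : PRAC α where
  n := k
  q0 := 0
  F := F
  V _ := 1
  Vhash := of fun _ _ => (k : ℝ)⁻¹
  Vdollar := 1
  ds _ := (doublyStochastic_iff_mem _).2 (one_mem _)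
  ds_hash := (doublyStochastic_iff_mem _).2 <| by
    simpa using uniform_mem_doublyStochastic (m := Fin k)
  ds_dollar := (doublyStochastic_iff_mem _).2 (one_mem _)

theorem accProb_coin (k : ℕ) [NeZero k] (F : Finset (Fin k)) (w : List α) :
    (coin k F).accProb w = #F / k := by
  simp [accProb_eq_sum_wordMatrix, wordMatrix, coin, div_eq_mul_inv]

theorem recognizesWithProb_of_forall {A : PRAC α} {L : Set (List α)} {p : ℝ}
    (hp : 1 / 2 < p) (hp1 : p ≤ 1) (hL : ∀ w ∈ L, p ≤ A.accProb w)
    (hLc : ∀ w ∉ L, A.accProb w ≤ 1 - p) : A.RecognizesWithProb L p :=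
  ⟨by linarith, by linarith, hp1, hL, hLc⟩

theorem exists_recognizesWithProb_inter {L1 L2 : Set (List α)} {A1 A2 : PRAC α} {p1 p2 : ℝ}
    (hp1 : 2 / 3 < p1) (hp2 : 2 / 3 < p2)
    (h1 : A1.RecognizesWithProb L1 p1) (h2 : A2.RecognizesWithProb L2 p2) :
    ∃ (B : PRAC α) (p : ℝ), 1 / 2 < p ∧ B.RecognizesWithProb (L1 ∩ L2) p := by
  obtain ⟨-, -, hp1_le, hL1, hL1c⟩ := h1
  obtain ⟨-, -, -, hL2, hL2c⟩ := h2
  set m := min p1 p2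
  set p := min (1 / 4 + 3 / 4 * (p1 * p2)) (3 / 4 * m)
  have hm : 2 / 3 < m := lt_min hp1 hp2
  have hp_le_in : p ≤ 1 / 4 + 3 / 4 * (p1 * p2) := min_le_left _ _
  have hp_le_out : p ≤ 3 / 4 * m := min_le_right _ _
  have hp : 1 / 2 < p := lt_min (by nlinarith) (by linarith)
  have hacc : ∀ w, ((A1.inter A2).union (coin 4 {0})).accProb w =
      1 / 4 + 3 / 4 * (A1.accProb w * A2.accProb w) := fun w => by
    rw [accProb_union, accProb_inter, accProb_coin]
    norm_num
    ring
  refine ⟨(A1.inter A2).union (coin 4 {0}), p, hp, recognizesWithProb_of_forall hp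
    (by linarith [min_le_left p1 p2]) (fun w hw => ?_) (fun w hw => ?_)⟩
  · have : p1 * p2 ≤ A1.accProb w * A2.accProb w :=
      mul_le_mul (hL1 w hw.1) (hL2 w hw.2) (by linarith) (A1.accProb_nonneg w)
    linarith [hacc w]
  · have : A1.accProb w * A2.accProb w ≤ 1 - m := by
      rcases not_and_or.1 hw with hw | hw
      · exact (mul_le_of_le_one_right (A1.accProb_nonneg w) (A2.accProb_le_one w)).trans
          ((hL1c w hw).trans (by linarith [min_le_left p1 p2]))
      · exact (mul_le_of_le_one_left (A2.accProb_nonneg w) (A1.accProb_le_one w)).trans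
          ((hL2c w hw).trans (by linarith [min_le_right p1 p2]))
    linarith [hacc w]

end PRAC

/-- If `L₁` is recognized with probability `> 2/3` and `L₂` is recognized with probability
`> 2/3`, then `L₁ ∩ L₂` and `L₁ ∪ L₂` are recognized with probability `> 1/2`. -/
theorem prac_union_inter {α : Type} (L1 L2 : Set (List α)) (A1 A2 : PRAC α) (p1 p2 : ℝ)
    (hp1 : 2 / 3 < p1) (hp2 : 2 / 3 < p2)
    (h1 : A1.RecognizesWithProb L1 p1) (h2 : A2.RecognizesWithProb L2 p2) :
    (∃ (B : PRAC α) (p : ℝ), 1 / 2 < p ∧ B.RecognizesWithProb (L1 ∩ L2) p) ∧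
    (∃ (B : PRAC α) (p : ℝ), 1 / 2 < p ∧ B.RecognizesWithProb (L1 ∪ L2) p) := by
  refine ⟨PRAC.exists_recognizesWithProb_inter hp1 hp2 h1 h2, ?_⟩
  obtain ⟨B, p, hp, hB⟩ := PRAC.exists_recognizesWithProb_inter hp1 hp2 h1.compl h2.compl
  refine ⟨B.compl, p, hp, ?_⟩
  simpa [Set.compl_inter] using hB.compl
end

section
/- If a PRA-C recognizes a language L ⊆ Σ* with probability 1 (i.e., every word in L is accepted with probability 1 and every word not in L is accepted with probability 0), then there exists a deterministic finite automaton accepting exactly L such that for every letter σ ∈ Σ the transition map q ↦ step(q,σ) is a bijection of the state set (i.e., L is recognized by a permutation automaton). -/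
open Finset Matrix

theorem Function.exists_iterate_idempotent {β : Type*} [Finite β] (f : β → β) :
    ∃ k, 0 < k ∧ f^[k] ∘ f^[k] = f^[k] := by
  obtain ⟨i, j, hij, hfij⟩ : ∃ i j, i < j ∧ f^[i] = f^[j] := by
    obtain ⟨i, j, hne, h⟩ := Finite.exists_ne_map_eq_of_infinite fun m : ℕ => f^[m]
    rcases hne.lt_or_gt with hlt | hlt
    exacts [⟨i, j, hlt, h⟩, ⟨j, i, hlt, h.symm⟩]
  set p := j - i
  have hper : ∀ m, i ≤ m → f^[m + p] = f^[m] := fun m hm => by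
    rw [show m + p = (m - i) + j by omega, Function.iterate_add, ← hfij,
      ← Function.iterate_add, Nat.sub_add_cancel hm]
  have hper_mul : ∀ t m, i ≤ m → f^[m + t * p] = f^[m] := fun t => by
    induction t with
    | zero => simp
    | succ t ih =>
      intro m hm
      rw [Nat.succ_mul, ← Nat.add_assoc, hper _ (by omega), ih m hm]
  refine ⟨(i + 1) * p, Nat.mul_pos (by omega) (by omega), ?_⟩
  rw [← Function.iterate_add]
  exact hper_mul _ _ (Nat.le_mul_of_pos_right _ (by omega) |>.trans' (by omega))

theorem Finset.subset_apply_of_idempotent {ι : Type*} [DecidableEq ι] {f : Finset ι → Finset ι}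
    (hunion : ∀ S T, f (S ∪ T) = f S ∪ f T) (hcard : ∀ S, #S ≤ #(f S))
    (hidem : ∀ S, f (f S) = f S) (S : Finset ι) : S ⊆ f S := by
  have hcard' : #(S ∪ f S) ≤ #(f S) := by
    simpa [hunion, hidem] using hcard (S ∪ f S)
  rw [eq_of_subset_of_card_le subset_union_right hcard']
  exact subset_union_left

namespace Language

variable {α : Type*} {L : Language α}

theorem bijective_step_toDFA [Finite (Set.range L.leftQuotient)] {a : α} {k : ℕ} (hk : 0 < k)
    (h : ∀ x, L.leftQuotient (x ++ List.replicate k a) = L.leftQuotient x) :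
    Function.Bijective (L.toDFA.step · a) := by
  have hsurj : Function.Surjective (L.toDFA.step · a) := by
    rintro ⟨_, x, rfl⟩
    refine ⟨⟨_, x ++ List.replicate (k - 1) a, rfl⟩, Subtype.ext ?_⟩
    rw [step_toDFA, ← leftQuotient_append, List.append_assoc, ← List.replicate_succ',
      Nat.sub_add_cancel hk, h]
  exact ⟨Finite.injective_iff_surjective.mpr hsurj, hsurj⟩

end Language

namespace Matrix

variable {ι : Type*} [Fintype ι]

noncomputable def posSupport (v : ι → ℝ) : Finset ι := {i | 0 < v i}

open Classical in
/-- `M` acts on column vectors, so `M i j` is the probability of moving from `j` to `i`. -/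
noncomputable def supportImage (M : Matrix ι ι ℝ) (S : Finset ι) : Finset ι :=
  {i | ∃ j ∈ S, 0 < M i j}

@[simp]
theorem mem_posSupport {v : ι → ℝ} {i : ι} : i ∈ posSupport v ↔ 0 < v i := by
  simp [posSupport]

@[simp]
theorem mem_supportImage {M : Matrix ι ι ℝ} {S : Finset ι} {i : ι} :
    i ∈ M.supportImage S ↔ ∃ j ∈ S, 0 < M i j := by
  simp [supportImage]

theorem supportImage_mono (M : Matrix ι ι ℝ) {S T : Finset ι} (h : S ⊆ T) :
    M.supportImage S ⊆ M.supportImage T := by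
  intro i
  simp only [mem_supportImage]
  exact fun ⟨j, hj, hpos⟩ => ⟨j, h hj, hpos⟩

theorem supportImage_union [DecidableEq ι] (M : Matrix ι ι ℝ) (S T : Finset ι) :
    M.supportImage (S ∪ T) = M.supportImage S ∪ M.supportImage T := by
  ext i
  simp only [mem_supportImage, mem_union, or_and_right, exists_or]

theorem posSupport_mulVec {M : Matrix ι ι ℝ} (hM : ∀ i j, 0 ≤ M i j) {v : ι → ℝ}
    (hv : ∀ i, 0 ≤ v i) : posSupport (M *ᵥ v) = M.supportImage (posSupport v) := by
  ext i
  simp only [mem_posSupport, mem_supportImage, mulVec, dotProduct,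
    sum_pos_iff_of_nonneg fun j _ => mul_nonneg (hM i j) (hv j), mem_univ, true_and]
  constructor
  · rintro ⟨j, h⟩
    exact ⟨j, (hv j).lt_of_ne' fun h0 => by simp [h0] at h,
      (hM i j).lt_of_ne' fun h0 => by simp [h0] at h⟩
  · rintro ⟨j, hvj, hMij⟩
    exact ⟨j, mul_pos hMij hvj⟩

theorem card_le_card_supportImage [DecidableEq ι] {M : Matrix ι ι ℝ}
    (hM : M ∈ doublyStochastic ℝ ι) (S : Finset ι) : #S ≤ #(M.supportImage S) := by
  have hzero : ∀ j ∈ S, ∀ i ∉ M.supportImage S, M i j = 0 := fun j hj i hi =>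
    (nonneg_of_mem_doublyStochastic hM).eq_of_not_lt' fun hpos =>
      hi (mem_supportImage.mpr ⟨j, hj, hpos⟩)
  suffices (#S : ℝ) ≤ #(M.supportImage S) by exact_mod_cast this
  calc (#S : ℝ) = ∑ j ∈ S, ∑ i, M i j := by simp [sum_col_of_mem_doublyStochastic hM]
    _ = ∑ j ∈ S, ∑ i ∈ M.supportImage S, M i j :=
      sum_congr rfl fun j hj => (sum_subset (subset_univ _) fun i _ hi => hzero j hj i hi).symm
    _ = ∑ i ∈ M.supportImage S, ∑ j ∈ S, M i j := sum_comm
    _ ≤ ∑ i ∈ M.supportImage S, ∑ j, M i j := by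
      gcongr
      exacts [fun _ _ _ => nonneg_of_mem_doublyStochastic hM, subset_univ S]
    _ = #(M.supportImage S) := by simp [sum_row_of_mem_doublyStochastic hM]

theorem disjoint_posSupport_of_sum_nonpos {p : ι → ℝ} (hp : ∀ i, 0 ≤ p i) {F : Finset ι}
    (h : ∑ i ∈ F, p i ≤ 0) : Disjoint (posSupport p) F := by
  refine disjoint_left.mpr fun i hi hiF => ?_
  have := single_le_sum (fun j _ => hp j) hiF
  rw [mem_posSupport] at hi
  linarith

theorem posSupport_subset_of_one_le_sum [DecidableEq ι] {p : ι → ℝ} (hp : p ∈ stdSimplex ℝ ι)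
    {F : Finset ι} (h : 1 ≤ ∑ i ∈ F, p i) : posSupport p ⊆ F := by
  have hcompl : ∑ i ∈ Fᶜ, p i ≤ 0 := by linarith [sum_compl_add_sum F p, hp.2]
  exact disjoint_compl_right_iff.mp (disjoint_posSupport_of_sum_nonpos hp.1 hcompl)

theorem posSupport_nonempty {p : ι → ℝ} (hp : p ∈ stdSimplex ℝ ι) : (posSupport p).Nonempty := by
  obtain ⟨i, -, hi⟩ := (sum_pos_iff_of_nonneg fun i _ => hp.1 i).mp (hp.2.symm ▸ one_pos)
  exact ⟨i, mem_posSupport.mpr hi⟩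

theorem mulVec_mem_stdSimplex [DecidableEq ι] {M : Matrix ι ι ℝ} (hM : M ∈ colStochastic ℝ ι)
    {p : ι → ℝ} (hp : p ∈ stdSimplex ℝ ι) : M *ᵥ p ∈ stdSimplex ℝ ι :=
  ⟨nonneg_mulVec_of_mem_colStochastic hM hp.1, (sum_mulVec_of_mem_colStochastic hM).trans hp.2⟩

variable [DecidableEq ι] {α : Type*} {M : α → Matrix ι ι ℝ}

theorem foldl_mulVec_mem_stdSimplex (hM : ∀ a, M a ∈ colStochastic ℝ ι) (w : List α)
    {p : ι → ℝ} (hp : p ∈ stdSimplex ℝ ι) :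
    w.foldl (fun v a => M a *ᵥ v) p ∈ stdSimplex ℝ ι := by
  induction w generalizing p with
  | nil => exact hp
  | cons a w ih => exact ih (mulVec_mem_stdSimplex (hM a) hp)

theorem posSupport_foldl_mulVec (hM : ∀ a, M a ∈ colStochastic ℝ ι) (w : List α)
    {p : ι → ℝ} (hp : p ∈ stdSimplex ℝ ι) :
    posSupport (w.foldl (fun v a => M a *ᵥ v) p) =
      w.foldl (fun S a => (M a).supportImage S) (posSupport p) := by
  induction w generalizing p with
  | nil => rfl
  | cons a w ih =>
    rw [List.foldl_cons, List.foldl_cons, ih (mulVec_mem_stdSimplex (hM a) hp),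
      posSupport_mulVec (hM a).1 hp.1]

end Matrix

theorem DoublyStochastic.mem_doublyStochastic {n : ℕ} {M : Matrix (Fin n) (Fin n) ℝ}
    (hM : DoublyStochastic M) : M ∈ doublyStochastic ℝ (Fin n) :=
  mem_doublyStochastic_iff_sum.mpr hM

theorem DoublyStochastic.mem_colStochastic {n : ℕ} {M : Matrix (Fin n) (Fin n) ℝ}
    (hM : DoublyStochastic M) : M ∈ colStochastic ℝ (Fin n) :=
  (mem_doublyStochastic_iff_mem_rowStochastic_and_mem_colStochastic.mp
    hM.mem_doublyStochastic).2

namespace PRAC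

variable {α : Type} (A : PRAC α)

noncomputable def reach (w : List α) (S : Finset (Fin A.n)) : Finset (Fin A.n) :=
  w.foldl (fun S a => (A.V a).supportImage S) S

noncomputable def finalDist (w : List α) : Fin A.n → ℝ :=
  A.Vdollar *ᵥ w.foldl (fun v a => A.V a *ᵥ v) (A.Vhash *ᵥ Pi.single A.q0 1)

noncomputable def finalSupport (w : List α) : Finset (Fin A.n) :=
  A.Vdollar.supportImage (A.reach w (A.Vhash.supportImage {A.q0}))

theorem reach_cons (a : α) (w : List α) (S : Finset (Fin A.n)) :
    A.reach (a :: w) S = A.reach w ((A.V a).supportImage S) :=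
  rfl

theorem reach_append (x y : List α) (S : Finset (Fin A.n)) :
    A.reach (x ++ y) S = A.reach y (A.reach x S) :=
  List.foldl_append

theorem reach_mono (w : List α) {S T : Finset (Fin A.n)} (h : S ⊆ T) :
    A.reach w S ⊆ A.reach w T := by
  induction w generalizing S T with
  | nil => exact h
  | cons a w ih => exact ih (supportImage_mono _ h)

theorem reach_union (w : List α) (S T : Finset (Fin A.n)) :
    A.reach w (S ∪ T) = A.reach w S ∪ A.reach w T := by
  induction w generalizing S T with
  | nil => rfl
  | cons a w ih => rw [reach_cons, reach_cons, reach_cons, supportImage_union, ih]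

theorem card_le_card_reach (w : List α) (S : Finset (Fin A.n)) : #S ≤ #(A.reach w S) := by
  induction w generalizing S with
  | nil => rfl
  | cons a w ih =>
    exact (card_le_card_supportImage (A.ds a).mem_doublyStochastic S).trans (ih _)

theorem reach_replicate (k : ℕ) (a : α) :
    A.reach (List.replicate k a) = (A.V a).supportImage^[k] := by
  funext S
  induction k generalizing S with
  | zero => rfl
  | succ k ih => rw [List.replicate_succ, Function.iterate_succ_apply, ← ih, reach_cons]

theorem accProb_eq_sum_finalDist (w : List α) : A.accProb w = ∑ q ∈ A.F, A.finalDist w q :=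
  rfl

theorem foldl_mulVec_start_mem_stdSimplex (w : List α) :
    w.foldl (fun v a => A.V a *ᵥ v) (A.Vhash *ᵥ Pi.single A.q0 1) ∈ stdSimplex ℝ (Fin A.n) :=
  foldl_mulVec_mem_stdSimplex (fun a => (A.ds a).mem_colStochastic) w <|
    mulVec_mem_stdSimplex A.ds_hash.mem_colStochastic (single_mem_stdSimplex ℝ A.q0)

theorem finalDist_mem_stdSimplex (w : List α) : A.finalDist w ∈ stdSimplex ℝ (Fin A.n) :=
  mulVec_mem_stdSimplex A.ds_dollar.mem_colStochastic (A.foldl_mulVec_start_mem_stdSimplex w)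

theorem posSupport_finalDist (w : List α) : posSupport (A.finalDist w) = A.finalSupport w := by
  have hsingle : posSupport (Pi.single A.q0 1 : Fin A.n → ℝ) = {A.q0} := by
    ext i
    by_cases h : i = A.q0 <;> simp [h]
  rw [finalDist, posSupport_mulVec A.ds_dollar.1 (A.foldl_mulVec_start_mem_stdSimplex w).1,
    posSupport_foldl_mulVec (fun a => (A.ds a).mem_colStochastic) w
      (mulVec_mem_stdSimplex A.ds_hash.mem_colStochastic (single_mem_stdSimplex ℝ A.q0)),
    posSupport_mulVec A.ds_hash.1 (single_mem_stdSimplex ℝ A.q0).1, hsingle]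
  rfl

noncomputable def acceptsFrom (S : Finset (Fin A.n)) : Language α :=
  {y | A.Vdollar.supportImage (A.reach y S) ⊆ A.F}

theorem mem_acceptsFrom {S : Finset (Fin A.n)} {y : List α} :
    y ∈ A.acceptsFrom S ↔ A.Vdollar.supportImage (A.reach y S) ⊆ A.F :=
  Iff.rfl

theorem finalSupport_nonempty (w : List α) : (A.finalSupport w).Nonempty :=
  A.posSupport_finalDist w ▸ posSupport_nonempty (A.finalDist_mem_stdSimplex w)

variable {A} {L : Language α}

theorem RecognizesWithProb.finalSupport_subset (hL : A.RecognizesWithProb L 1) {w : List α}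
    (hw : w ∈ L) : A.finalSupport w ⊆ A.F :=
  A.posSupport_finalDist w ▸ posSupport_subset_of_one_le_sum (A.finalDist_mem_stdSimplex w)
    (A.accProb_eq_sum_finalDist w ▸ hL.2.2.2.1 w hw)

theorem RecognizesWithProb.disjoint_finalSupport (hL : A.RecognizesWithProb L 1) {w : List α}
    (hw : w ∉ L) : Disjoint (A.finalSupport w) A.F :=
  A.posSupport_finalDist w ▸ disjoint_posSupport_of_sum_nonpos (A.finalDist_mem_stdSimplex w).1
    (A.accProb_eq_sum_finalDist w ▸ (hL.2.2.2.2 w hw).trans_eq (sub_self 1))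

theorem RecognizesWithProb.mem_iff_not_disjoint (hL : A.RecognizesWithProb L 1) (w : List α) :
    w ∈ L ↔ ¬Disjoint (A.finalSupport w) A.F :=
  ⟨fun hw hdisj => (A.finalSupport_nonempty w).ne_empty
    (hdisj.eq_bot_of_le (hL.finalSupport_subset hw)), not_imp_comm.mp hL.disjoint_finalSupport⟩

theorem RecognizesWithProb.mem_iff_finalSupport_subset (hL : A.RecognizesWithProb L 1)
    (w : List α) : w ∈ L ↔ A.finalSupport w ⊆ A.F :=
  ⟨hL.finalSupport_subset, fun hsub => (hL.mem_iff_not_disjoint w).mpr fun hdisj =>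
    (A.finalSupport_nonempty w).ne_empty (hdisj.eq_bot_of_le hsub)⟩

theorem RecognizesWithProb.mem_iff_of_finalSupport_subset (hL : A.RecognizesWithProb L 1)
    {w w' : List α} (h : A.finalSupport w ⊆ A.finalSupport w') : w ∈ L ↔ w' ∈ L := by
  constructor
  · simp only [hL.mem_iff_not_disjoint]
    exact fun hw hdisj => hw (hdisj.mono_left h)
  · simp only [hL.mem_iff_finalSupport_subset]
    exact h.trans

theorem RecognizesWithProb.leftQuotient_eq (hL : A.RecognizesWithProb L 1) (x : List α) :
    L.leftQuotient x = A.acceptsFrom (A.reach x (A.Vhash.supportImage {A.q0})) := by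
  ext y
  rw [Language.mem_leftQuotient, hL.mem_iff_finalSupport_subset, mem_acceptsFrom, finalSupport,
    reach_append]

theorem RecognizesWithProb.finite_range_leftQuotient (hL : A.RecognizesWithProb L 1) :
    (Set.range L.leftQuotient).Finite :=
  (Set.finite_range A.acceptsFrom).subset <|
    Set.range_subset_iff.mpr fun x => ⟨_, (hL.leftQuotient_eq x).symm⟩

theorem RecognizesWithProb.exists_leftQuotient_append_replicate (hL : A.RecognizesWithProb L 1)
    (a : α) : ∃ k, 0 < k ∧ ∀ x,
      L.leftQuotient (x ++ List.replicate k a) = L.leftQuotient x := by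
  obtain ⟨k, hk, hidem⟩ := Function.exists_iterate_idempotent (A.V a).supportImage
  have hinfl : ∀ S, S ⊆ A.reach (List.replicate k a) S := by
    rw [reach_replicate]
    refine subset_apply_of_idempotent (fun S T => ?_) (fun S => ?_) (congrFun hidem)
    · rw [← reach_replicate, reach_union]
    · rw [← reach_replicate]
      exact A.card_le_card_reach _ S
  refine ⟨k, hk, fun x => Language.ext fun y => ?_⟩
  rw [Language.mem_leftQuotient, Language.mem_leftQuotient, List.append_assoc]
  refine (hL.mem_iff_of_finalSupport_subset ?_).symm
  simp only [finalSupport, reach_append]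
  exact supportImage_mono _ (A.reach_mono _ (hinfl _))

end PRAC

/-- If a PRA-C recognizes a language with probability 1, the language is recognized by a
permutation automaton. -/
theorem prac_prob_one_permutation_automaton {α : Type} (L : Set (List α)) (A : PRAC α)
    (hacc : ∀ w ∈ L, A.accProb w = 1) (hrej : ∀ w ∉ L, A.accProb w = 0) :
    ∃ (σ : Type) (_ : Fintype σ) (D : DFA α σ),
      (∀ w, w ∈ D.accepts ↔ w ∈ L) ∧
      ∀ a : α, Function.Bijective (fun q => D.step q a) := by
  have hL : A.RecognizesWithProb L 1 :=
    ⟨by norm_num, by norm_num, le_rfl, fun w hw => (hacc w hw).ge,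
      fun w hw => by rw [hrej w hw, sub_self]⟩
  have := hL.finite_range_leftQuotient.to_subtype
  refine ⟨_, Fintype.ofFinite _, Language.toDFA L,
    fun w => Iff.of_eq (congrArg (w ∈ ·) (Language.accepts_toDFA L)), fun a => ?_⟩
  obtain ⟨k, hk, hcancel⟩ := hL.exists_leftQuotient_append_replicate a
  exact Language.bijective_step_toDFA hk hcancel
end
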